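/- More generally, for any slope 0 < a ≤ 1/n, the publishers game with ranking function r̂^a_i(x) = a·ν_i(x) + 1/n has the exact potential φ(x) = Σ_{i=1}^n ( −a·d*(x_i) − λ·d_0(x_i) ). -/

import Mathlib

/-! Changing player `i`'s strategy leaves every other summand of `φ`, and the opponents' term
`(1/(n-1)) · Σ_{j≠i} d*(x_j)` of `ν_i`, untouched; so both `φ` and `u_i` change by
`−a·Δd*(x_i) − λ·Δd_0(x_i)`. -/

noncomputable section

def relRel (n k : ℕ) (dstar : (Fin k → ℝ) → ℝ) (x : Fin n → (Fin k → ℝ))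
    (i : Fin n) : ℝ :=
  (1 / ((n : ℝ) - 1)) * (∑ j ∈ Finset.univ.erase i, dstar (x j)) - dstar (x i)

/-- Linear RRP ranking function with slope a: r̂^a_i = a·ν_i + 1/n. -/
def linRankA (n k : ℕ) (a : ℝ) (dstar : (Fin k → ℝ) → ℝ)
    (x : Fin n → (Fin k → ℝ)) (i : Fin n) : ℝ :=
  a * relRel n k dstar x i + 1 / (n : ℝ)

def utilA (n k : ℕ) (a lam : ℝ) (dstar : (Fin k → ℝ) → ℝ)
    (d0 : Fin n → (Fin k → ℝ) → ℝ) (x : Fin n → (Fin k → ℝ)) (i : Fin n) : ℝ :=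
  linRankA n k a dstar x i - lam * d0 i (x i)

/-- φ(x) = ∑_i (−a·d*(x_i) − λ·d_0(x_i)). -/
def potA (n k : ℕ) (a lam : ℝ) (dstar : (Fin k → ℝ) → ℝ)
    (d0 : Fin n → (Fin k → ℝ) → ℝ) (x : Fin n → (Fin k → ℝ)) : ℝ :=
  ∑ i, (-(a * dstar (x i)) - lam * d0 i (x i))

theorem sum_update_sub_sum_update {ι α M : Type*} [Fintype ι] [DecidableEq ι] [AddCommGroup M]
    (g : ι → α → M) (x : ι → α) (i : ι) (y y' : α) :
    ∑ j, g j (Function.update x i y j) - ∑ j, g j (Function.update x i y' j) = g i y - g i y' := by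
  rw [← Finset.sum_sub_distrib, Fintype.sum_eq_single i fun j hj => by
    simp only [Function.update_of_ne hj, sub_self]]
  simp only [Function.update_self]

theorem relRel_update_self (n k : ℕ) (dstar : (Fin k → ℝ) → ℝ) (x : Fin n → (Fin k → ℝ))
    (i : Fin n) (y : Fin k → ℝ) :
    relRel n k dstar (Function.update x i y) i =
      (1 / ((n : ℝ) - 1)) * (∑ j ∈ Finset.univ.erase i, dstar (x j)) - dstar y := by
  have hothers : ∑ j ∈ Finset.univ.erase i, dstar (Function.update x i y j) =
      ∑ j ∈ Finset.univ.erase i, dstar (x j) :=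
    Finset.sum_congr rfl fun j hj => by rw [Function.update_of_ne (Finset.ne_of_mem_erase hj)]
  rw [relRel, hothers, Function.update_self]

theorem linRankA_exact_potential_general (n k : ℕ) (a lam : ℝ)
    (dstar : (Fin k → ℝ) → ℝ)
    (d0 : Fin n → (Fin k → ℝ) → ℝ)
    (x : Fin n → (Fin k → ℝ)) (i : Fin n) (x' x'' : Fin k → ℝ) :
    potA n k a lam dstar d0 (Function.update x i x') -
      potA n k a lam dstar d0 (Function.update x i x'') =
    utilA n k a lam dstar d0 (Function.update x i x') i -
      utilA n k a lam dstar d0 (Function.update x i x'') i := by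
  rw [potA, potA, sum_update_sub_sum_update (fun j z => -(a * dstar z) - lam * d0 j z)]
  simp only [utilA, linRankA, relRel_update_self, Function.update_self]
  ring

/-- For any slope 0 < a ≤ 1/n, φ is an exact potential for the publishers game
with ranking function r̂^a. -/
theorem linRankA_exact_potential (n k : ℕ) (hn : 2 ≤ n) (a lam : ℝ)
    (ha : 0 < a) (ha' : a ≤ 1 / (n : ℝ)) (hlam : 0 < lam)
    (dstar : (Fin k → ℝ) → ℝ) (hdstar : ∀ y, dstar y ∈ Set.Icc (0 : ℝ) 1)
    (d0 : Fin n → (Fin k → ℝ) → ℝ) (hd0 : ∀ i y, d0 i y ∈ Set.Icc (0 : ℝ) 1)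
    (x : Fin n → (Fin k → ℝ)) (i : Fin n) (x' x'' : Fin k → ℝ) :
    potA n k a lam dstar d0 (Function.update x i x') -
      potA n k a lam dstar d0 (Function.update x i x'') =
    utilA n k a lam dstar d0 (Function.update x i x') i -
      utilA n k a lam dstar d0 (Function.update x i x'') i :=
  linRankA_exact_potential_general n k a lam dstar d0 x i x' x''

end
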